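/- arXiv:1005.4303 — 8 statements merged into one kernel-verified Lean document; each statement's English description precedes it below -/
import Mathlib

section
/- Let Γ be a set and let a, b : Γ → [-1,1] be functions with a(i) < b(i) for all i ∈ Γ and ∑_{i∈Γ} (max(a(i),0) + max(-b(i),0)) < 1. Then the compact space B(Γ,a,b) is homeomorphic to a space B(Γ,a'',b'') where the pair (a'',b'') is admissible, i.e. -1 ≤ a''(i) ≤ 0 < b''(i) ≤ 1 and |a''(i)| ≤ |b''(i)| for all i ∈ Γ. -/
/-!
Let `c i` be the point of `[a i, b i]` nearest to `0` and `m i = |c i|` its distance from `0`.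
For `t ∈ [a i, b i]` one has `|t - c i| = |t| - m i`, so on the box the condition
`∑ |x i| ≤ 1` is equivalent to `∑ |x i - c i| ≤ r := 1 - ∑ m i`. The affine map
`x ↦ (x - c) / r` therefore carries `B(Γ,a,b)` onto `B(Γ,a',b')` with `a' ≤ 0 ≤ b'`.
Reflecting the coordinates where `|a' i| > |b' i|`, and intersecting the box with `[-1,1]^Γ`,
which does not change the ball, gives an admissible pair.
-/

open Set Filter Topology

noncomputable section

def Ball (ι : Type*) : Set (ι → ℝ) :=
  {x | ∀ s : Finset ι, ∑ i ∈ s, |x i| ≤ 1}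

def BallAB (ι : Type*) (a b : ι → ℝ) : Set (ι → ℝ) :=
  {x | x ∈ Ball ι ∧ ∀ i, a i ≤ x i ∧ x i ≤ b i}

def Admissible {ι : Type*} (a b : ι → ℝ) : Prop :=
  ∀ i, -1 ≤ a i ∧ a i ≤ 0 ∧ 0 < b i ∧ b i ≤ 1 ∧ |a i| ≤ |b i|

theorem forall_sum_le_iff_forall_sum_sub_le {ι : Type*} {u m : ι → ℝ} (hm0 : 0 ≤ m)
    (hmu : m ≤ u) (hm : Summable m) (C : ℝ) :
    (∀ s : Finset ι, ∑ i ∈ s, u i ≤ C) ↔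
      ∀ s : Finset ι, ∑ i ∈ s, (u i - m i) ≤ C - ∑' i, m i := by
  classical
  refine ⟨fun h s => ?_, fun h s => ?_⟩
  · have : ∑' i, m i ≤ C - ∑ i ∈ s, u i + ∑ i ∈ s, m i := by
      refine hm.tsum_le_of_sum_le fun t => ?_
      calc ∑ i ∈ t, m i ≤ ∑ i ∈ s ∪ t, m i :=
            Finset.sum_le_sum_of_subset_of_nonneg Finset.subset_union_right fun i _ _ => hm0 i
        _ = ∑ i ∈ (s ∪ t) \ s, m i + ∑ i ∈ s, m i :=
            (Finset.sum_sdiff Finset.subset_union_left).symm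
        _ ≤ ∑ i ∈ (s ∪ t) \ s, u i + ∑ i ∈ s, m i := by gcongr with i; exact hmu i
        _ = ∑ i ∈ s ∪ t, u i - ∑ i ∈ s, u i + ∑ i ∈ s, m i := by
            rw [← Finset.sum_sdiff Finset.subset_union_left]; ring
        _ ≤ C - ∑ i ∈ s, u i + ∑ i ∈ s, m i := by gcongr; exact h _
    rw [Finset.sum_sub_distrib]
    linarith
  · have hms := hm.sum_le_tsum s fun i _ => hm0 i
    have hs := h s
    rw [Finset.sum_sub_distrib] at hs
    linarith

def nearestToZero (A B : ℝ) : ℝ := max A 0 - max (-B) 0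

theorem nearestToZero_mem_Icc {A B : ℝ} (h : A ≤ B) : nearestToZero A B ∈ Icc A B := by
  simp only [nearestToZero, mem_Icc]
  rcases max_cases A 0 with ⟨hA, _⟩ | ⟨hA, _⟩ <;> rcases max_cases (-B) 0 with ⟨hB, _⟩ | ⟨hB, _⟩ <;>
    rw [hA, hB] <;> constructor <;> linarith

theorem abs_sub_nearestToZero {A B t : ℝ} (h1 : A ≤ t) (h2 : t ≤ B) :
    |t - nearestToZero A B| = |t| - (max A 0 + max (-B) 0) := by
  simp only [nearestToZero]
  rcases le_or_gt A 0 with hA | hA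
  · rcases le_or_gt 0 B with hB | hB
    · simp [max_eq_right hA, max_eq_right (neg_nonpos.2 hB)]
    · rw [max_eq_right hA, max_eq_left (by linarith : (0 : ℝ) ≤ -B),
        abs_of_nonpos (by linarith), abs_of_nonpos (by linarith : t ≤ 0)]
      ring
  · rw [max_eq_left hA.le, max_eq_right (by linarith : -B ≤ 0),
      abs_of_nonneg (by linarith), abs_of_nonneg (by linarith : (0 : ℝ) ≤ t)]
    ring

section BallAB

variable {Γ : Type*}

theorem abs_le_one_of_mem_Ball {x : Γ → ℝ} (hx : x ∈ Ball Γ) (i : Γ) : |x i| ≤ 1 := by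
  simpa using hx {i}

theorem BallAB_eq_max_min (a b : Γ → ℝ) :
    BallAB Γ a b = BallAB Γ (fun i => max (a i) (-1)) (fun i => min (b i) 1) := by
  ext x
  refine and_congr_right fun hx => forall_congr' fun i => ?_
  have := abs_le.1 (abs_le_one_of_mem_Ball hx i)
  simp only [max_le_iff, le_min_iff]
  constructor
  · rintro ⟨h1, h2⟩; exact ⟨⟨h1, this.1⟩, h2, this.2⟩
  · rintro ⟨⟨h1, _⟩, h2, _⟩; exact ⟨h1, h2⟩

theorem mul_add_mem_BallAB_iff {a b c m : Γ → ℝ} {r : ℝ} (hr : 0 < r) (hm0 : 0 ≤ m)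
    (hm : Summable m) (hmr : ∑' i, m i + r = 1)
    (hc : ∀ i t, a i ≤ t → t ≤ b i → |t - c i| = |t| - m i) (y : Γ → ℝ) :
    (fun i => r * y i + c i) ∈ BallAB Γ a b ↔
      y ∈ BallAB Γ (fun i => (a i - c i) / r) (fun i => (b i - c i) / r) := by
  have hbox : ∀ i, (a i ≤ r * y i + c i ∧ r * y i + c i ≤ b i) ↔
      ((a i - c i) / r ≤ y i ∧ y i ≤ (b i - c i) / r) := fun i => by
    rw [div_le_iff₀ hr, le_div_iff₀ hr]
    constructor <;> rintro ⟨h1, h2⟩ <;> constructor <;> linarith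
  simp only [BallAB, mem_ofPred_eq, hbox]
  refine and_congr_left fun hy => ?_
  have habs : ∀ i, |r * y i + c i| - m i = r * |y i| := fun i => by
    have hx := (hbox i).2 (hy i)
    rw [← hc i _ hx.1 hx.2, add_sub_cancel_right, abs_mul, abs_of_pos hr]
  have hmu : m ≤ fun i => |r * y i + c i| := fun i =>
    sub_nonneg.1 ((habs i).symm ▸ by positivity)
  simp only [Ball, mem_ofPred_eq]
  rw [forall_sum_le_iff_forall_sum_sub_le hm0 hmu hm 1]
  simp only [habs, ← Finset.mul_sum, show 1 - ∑' i, m i = r by linarith,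
    mul_le_iff_le_one_right hr]

def BallAB.recenterHomeomorph {a b c m : Γ → ℝ} {r : ℝ} (hr : 0 < r) (hm0 : 0 ≤ m)
    (hm : Summable m) (hmr : ∑' i, m i + r = 1)
    (hc : ∀ i t, a i ≤ t → t ≤ b i → |t - c i| = |t| - m i) :
    BallAB Γ (fun i => (a i - c i) / r) (fun i => (b i - c i) / r) ≃ₜ BallAB Γ a b :=
  (Homeomorph.piCongrRight fun i => affineHomeomorph r (c i) hr.ne').subtype fun y =>
    (mul_add_mem_BallAB_iff hr hm0 hm hmr hc y).symm

def BallAB.flipHomeomorph (p : Γ → Prop) [DecidablePred p] (a b : Γ → ℝ) :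
    BallAB Γ a b ≃ₜ
      BallAB Γ (fun i => if p i then -b i else a i) (fun i => if p i then -a i else b i) :=
  (Homeomorph.piCongrRight fun i =>
      affineHomeomorph (if p i then -1 else 1) 0 (by split_ifs <;> norm_num)).subtype fun x => by
    have habs : ∀ i, |(if p i then -1 else 1) * x i + 0| = |x i| := fun i => by
      split_ifs <;> simp
    simp only [BallAB, Ball, mem_ofPred_eq, Homeomorph.piCongrRight_apply, affineHomeomorph_apply,
      habs]
    refine and_congr_right fun _ => forall_congr' fun i => ?_
    split_ifs <;> constructor <;> rintro ⟨h1, h2⟩ <;> constructor <;> linarith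

theorem admissible_max_min_flip {a b : Γ → ℝ} (ha : ∀ i, a i ≤ 0) (hb : ∀ i, 0 ≤ b i)
    (hab : ∀ i, a i < b i) :
    Admissible (fun i => max (if b i < -a i then -b i else a i) (-1))
      (fun i => min (if b i < -a i then -a i else b i) 1) := by
  intro i
  dsimp only
  have hlohi : (if b i < -a i then -b i else a i) ≤ 0 ∧ 0 < (if b i < -a i then -a i else b i) ∧
      -(if b i < -a i then -b i else a i) ≤ (if b i < -a i then -a i else b i) := by
    have := ha i; have := hb i; have := hab i
    split_ifs <;> refine ⟨?_, ?_, ?_⟩ <;> linarith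
  generalize (if b i < -a i then -b i else a i) = lo, (if b i < -a i then -a i else b i) = hi
    at hlohi ⊢
  obtain ⟨hlo, hhi, hneg⟩ := hlohi
  have hlo' : max lo (-1) ≤ 0 := max_le hlo (by norm_num)
  have hhi' : 0 < min hi 1 := lt_min hhi one_pos
  refine ⟨le_max_right _ _, hlo', hhi', min_le_right _ _, ?_⟩
  rw [abs_of_nonpos hlo', abs_of_pos hhi']
  exact le_min ((neg_le_neg (le_max_left _ _)).trans hneg) (neg_le.1 (le_max_right _ _))

end BallAB

theorem statement0_general {Γ : Type*} (a b : Γ → ℝ)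
    (hab : ∀ i, a i < b i)
    (hsummable : Summable fun i => max (a i) 0 + max (-(b i)) 0)
    (hsum : (∑' i, (max (a i) 0 + max (-(b i)) 0)) < 1) :
    ∃ a'' b'' : Γ → ℝ, Admissible a'' b'' ∧
      Nonempty (↥(BallAB Γ a b) ≃ₜ ↥(BallAB Γ a'' b'')) := by
  classical
  set r := 1 - ∑' i, (max (a i) 0 + max (-(b i)) 0)
  have hr : 0 < r := sub_pos.2 hsum
  have hc i := nearestToZero_mem_Icc (hab i).le
  refine ⟨_, _, admissible_max_min_flip (a := fun i => (a i - nearestToZero (a i) (b i)) / r)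
    (b := fun i => (b i - nearestToZero (a i) (b i)) / r) (fun i => ?_) (fun i => ?_) (fun i => ?_),
    ⟨(BallAB.recenterHomeomorph hr (fun i => by positivity) hsummable (by ring)
      fun i t => abs_sub_nearestToZero).symm.trans
      ((BallAB.flipHomeomorph _ _ _).trans (Homeomorph.setCongr (BallAB_eq_max_min _ _)))⟩⟩
  · exact div_nonpos_of_nonpos_of_nonneg (sub_nonpos.2 (hc i).1) hr.le
  · exact div_nonneg (sub_nonneg.2 (hc i).2) hr.le
  · exact div_lt_div_of_pos_right (sub_lt_sub_right (hab i) _) hr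

/-- `B(Γ,a,b)` is homeomorphic to some `B(Γ,a'',b'')` with `(a'',b'')`
admissible, whenever `a, b : Γ → [-1,1]`, `a < b` pointwise and
`∑_i (max (a i) 0 + max (-(b i)) 0) < 1`. -/
theorem statement0 {Γ : Type*} (a b : Γ → ℝ)
    (ha : ∀ i, -1 ≤ a i ∧ a i ≤ 1) (hb : ∀ i, -1 ≤ b i ∧ b i ≤ 1)
    (hab : ∀ i, a i < b i)
    (hsummable : Summable fun i => max (a i) 0 + max (-(b i)) 0)
    (hsum : (∑' i, (max (a i) 0 + max (-(b i)) 0)) < 1) :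
    ∃ a'' b'' : Γ → ℝ, Admissible a'' b'' ∧
      Nonempty (↥(BallAB Γ a b) ≃ₜ ↥(BallAB Γ a'' b'')) :=
  statement0_general a b hab hsummable hsum
end
end

section
/- Let Γ be a set and (a,b) an admissible pair of functions on Γ. Then the map r : B(Γ) → B(Γ,a,b) defined coordinatewise by r(x)_i = min(max(a(i), x_i), b(i)) is a well-defined continuous map which restricts to the identity on B(Γ,a,b); consequently B(Γ,a,b) is a retract of B(Γ). -/
/-!
Clamping a coordinate into `[a i, b i]` is 1-Lipschitz and, since `a i ≤ 0 ≤ b i`, fixes `0`;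
so it never increases `|x i|` and therefore maps the ℓ¹-ball into itself. Continuity for the
product topology is coordinatewise.
-/

open Set Filter Topology

noncomputable section

section Clamp

variable {α : Type*} [AddCommGroup α] [LinearOrder α] [IsOrderedAddMonoid α]

lemma abs_min_max_sub_min_max_le (a b x y : α) :
    |min (max a x) b - min (max a y) b| ≤ |x - y| :=
  calc |min (max a x) b - min (max a y) b|
      ≤ max |max a x - max a y| |b - b| := abs_min_sub_min_le_max _ _ _ _
    _ = |max a x - max a y| := by simp
    _ ≤ max |a - a| |x - y| := abs_max_sub_max_le_max _ _ _ _
    _ = |x - y| := by simp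

lemma abs_min_max_le_abs {a b : α} (ha : a ≤ 0) (hb : 0 ≤ b) (x : α) :
    |min (max a x) b| ≤ |x| := by
  simpa [max_eq_right ha, min_eq_left hb] using abs_min_max_sub_min_max_le a b x 0

end Clamp

section Retraction

variable {Γ : Type*} {a b : Γ → ℝ}

theorem continuous_clamp (a b : Γ → ℝ) :
    Continuous (fun (x : Γ → ℝ) (i : Γ) => min (max (a i) (x i)) (b i)) :=
  continuous_pi fun i => (continuous_const.max (continuous_apply i)).min continuous_const

theorem mapsTo_clamp_ball_ballAB (ha : ∀ i, a i ≤ 0) (hb : ∀ i, 0 ≤ b i) :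
    MapsTo (fun (x : Γ → ℝ) (i : Γ) => min (max (a i) (x i)) (b i)) (Ball Γ) (BallAB Γ a b) := by
  intro x hx
  refine ⟨fun s => ?_, fun i => ⟨le_min (le_max_left _ _) ((ha i).trans (hb i)), min_le_right _ _⟩⟩
  calc ∑ i ∈ s, |min (max (a i) (x i)) (b i)|
      ≤ ∑ i ∈ s, |x i| := Finset.sum_le_sum fun i _ => abs_min_max_le_abs (ha i) (hb i) (x i)
    _ ≤ 1 := hx s

theorem clamp_eq_self_of_mem_ballAB {x : Γ → ℝ} (hx : x ∈ BallAB Γ a b) :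
    (fun i => min (max (a i) (x i)) (b i)) = x :=
  funext fun i => by rw [max_eq_right (hx.2 i).1, min_eq_left (hx.2 i).2]

end Retraction

/-- for an admissible pair `(a,b)`, the coordinatewise map
`r(x)_i = min (max (a i) (x i)) (b i)` is a well-defined continuous map from `B(Γ)`
to `B(Γ,a,b)` restricting to the identity on `B(Γ,a,b)`; consequently `B(Γ,a,b)`
is a retract of `B(Γ)`. -/
theorem statement1 {Γ : Type*} (a b : Γ → ℝ) (hab : Admissible a b) :
    Continuous (fun (x : Γ → ℝ) (i : Γ) => min (max (a i) (x i)) (b i)) ∧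
    Set.MapsTo (fun (x : Γ → ℝ) (i : Γ) => min (max (a i) (x i)) (b i))
      (Ball Γ) (BallAB Γ a b) ∧
    (∀ x ∈ BallAB Γ a b, (fun i => min (max (a i) (x i)) (b i)) = x) ∧
    ∃ ρ : ↥(Ball Γ) → ↥(BallAB Γ a b), Continuous ρ ∧
      (∀ x : ↥(Ball Γ), (ρ x : Γ → ℝ) = fun i => min (max (a i) (x.1 i)) (b i)) ∧
      (∀ x : ↥(Ball Γ), x.1 ∈ BallAB Γ a b → (ρ x : Γ → ℝ) = x.1) := by
  have hmaps := mapsTo_clamp_ball_ballAB (fun i => (hab i).2.1) (fun i => (hab i).2.2.1.le)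
  exact ⟨continuous_clamp a b, hmaps, fun x hx => clamp_eq_self_of_mem_ballAB hx,
    hmaps.restrict _ _ _, (continuous_clamp a b).restrict hmaps, fun _ => rfl,
    fun x hx => clamp_eq_self_of_mem_ballAB hx⟩
end
end

section
/- Let Γ be an infinite set and (a,b) an admissible pair of functions on Γ. Then B⁺(Γ) is homeomorphic to a retract of B(Γ,a,b). -/
open Set Filter Topology

noncomputable section

/-- `PosBall ι` is the positive cone `B⁺(ι) = {x ∈ B(ι) : x i ≥ 0 for all i}`. -/
def PosBall (ι : Type*) : Set (ι → ℝ) :=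
  {x | x ∈ Ball ι ∧ ∀ i, 0 ≤ x i}

/-!
In both cases we build continuous maps `e : B⁺(Γ) → B(Γ,a,b)` and `r : B(Γ,a,b) → B⁺(Γ)` with
`r ∘ e = id`; then `e ∘ r` is a retraction onto `range e`, which `e` identifies with `B⁺(Γ)`.

If `Γ = {q 0, q 1, …}` is countable, choose weights `0 < c ≤ b` of total mass at most `1` and let
`e x` be `c j * (x (q 0) + ⋯ + x (q (n - 1)))` at `j = q n`. The constraint `∑ x ≤ 1` on `B⁺(Γ)`
becomes the bound `≤ 1` on each cumulative sum, and `r` reads the cumulative sums back as the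
running maxima of the ratios `y / c` clamped to `[0, 1]`; their increments sum to at most `1`
for every `y`.

If `Γ` is uncountable, only countably many points lie in finite level sets of `j ↦ ⌈1 / b j⌉`,
so `Γ × ℕ` embeds into `Γ` with every `{i} × ℕ` inside one infinite level set. This yields
pairwise disjoint blocks `F i` of size `n i` with `b ≥ 1 / n i` on `F i`: `e` spreads `x i`
evenly over `F i` and `r` sums the positive parts of `y` over `F i`.
-/

open Function

theorem exists_retract_homeomorph_of_leftInverse {X Y : Type*} [TopologicalSpace X]
    [TopologicalSpace Y] {e : X → Y} {r : Y → X} (he : Continuous e) (hr : Continuous r)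
    (hre : LeftInverse r e) :
    ∃ A : Set Y, (∃ ρ : Y → Y, Continuous ρ ∧ range ρ ⊆ A ∧ ∀ y ∈ A, ρ y = y) ∧
      Nonempty (X ≃ₜ A) := by
  refine ⟨range e, ⟨e ∘ r, he.comp hr, range_comp_subset_range r e, ?_⟩,
    ⟨(hre.isEmbedding hr he).toHomeomorph⟩⟩
  rintro _ ⟨x, rfl⟩
  simp only [comp_apply, hre x]

theorem exists_retract_homeomorph_of_mapsTo {α β : Type*} [TopologicalSpace α]
    [TopologicalSpace β] {s : Set α} {t : Set β} {e : α → β} {r : β → α}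
    (he : Continuous e) (hr : Continuous r) (hes : MapsTo e s t) (hrt : MapsTo r t s)
    (hre : ∀ x ∈ s, r (e x) = x) :
    ∃ A : Set t, (∃ ρ : t → t, Continuous ρ ∧ range ρ ⊆ A ∧ ∀ y ∈ A, ρ y = y) ∧
      Nonempty (s ≃ₜ A) :=
  exists_retract_homeomorph_of_leftInverse (he.restrict hes) (hr.restrict hrt)
    fun x ↦ Subtype.ext (hre x x.2)

section Balls

variable {Γ : Type*}

theorem mem_posBall_iff {x : Γ → ℝ} :
    x ∈ PosBall Γ ↔ (∀ i, 0 ≤ x i) ∧ ∀ s : Finset Γ, ∑ i ∈ s, x i ≤ 1 := by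
  refine ⟨fun ⟨hx, h0⟩ ↦ ⟨h0, fun s ↦ ?_⟩, fun ⟨h0, h1⟩ ↦ ⟨fun s ↦ ?_, h0⟩⟩
  · exact (Finset.sum_le_sum fun i _ ↦ le_abs_self (x i)).trans (hx s)
  · simpa only [abs_of_nonneg (h0 _)] using h1 s

theorem le_one_of_mem_posBall {x : Γ → ℝ} (hx : x ∈ PosBall Γ) (i : Γ) : x i ≤ 1 := by
  simpa using (mem_posBall_iff.1 hx).2 {i}

theorem mem_ballAB_of_mem_posBall {a b x : Γ → ℝ} (ha : ∀ i, a i ≤ 0) (hx : x ∈ PosBall Γ)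
    (hxb : ∀ i, x i ≤ b i) : x ∈ BallAB Γ a b :=
  ⟨hx.1, fun i ↦ ⟨(ha i).trans (hx.2 i), hxb i⟩⟩

end Balls

theorem Monotone.sum_sub_le {M : ℕ → ℝ} (hM : Monotone M) {C : ℝ}
    (hC : ∀ n, M n ≤ C) (t : Finset ℕ) : ∑ n ∈ t, (M (n + 1) - M n) ≤ C - M 0 := by
  obtain ⟨N, htN⟩ := t.exists_nat_subset_range
  calc ∑ n ∈ t, (M (n + 1) - M n)
      ≤ ∑ n ∈ Finset.range N, (M (n + 1) - M n) :=
        Finset.sum_le_sum_of_subset_of_nonneg htN fun n _ _ ↦ sub_nonneg.2 (hM n.le_succ)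
    _ = M N - M 0 := Finset.sum_range_sub M N
    _ ≤ C - M 0 := by gcongr; exact hC N

theorem exists_pos_weights_le {Γ : Type*} [Countable Γ] {b : Γ → ℝ} (hb : ∀ j, 0 < b j) :
    ∃ c : Γ → ℝ, (∀ j, 0 < c j) ∧ (∀ j, c j ≤ b j) ∧ ∀ s : Finset Γ, ∑ j ∈ s, c j ≤ 1 := by
  obtain ⟨ε, hε0, hε1⟩ := (countable_univ (α := Γ)).exists_pos_forall_sum_le one_pos
  refine ⟨fun j ↦ min (b j) (ε j), fun j ↦ lt_min (hb j) (hε0 j), fun j ↦ min_le_left _ _,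
    fun s ↦ ?_⟩
  exact (Finset.sum_le_sum fun j _ ↦ min_le_right _ _).trans (hε1 s (subset_univ _))

namespace Cumulative

variable {Γ : Type*} (q : ℕ ≃ Γ) (c : Γ → ℝ)

def cumSum (x : Γ → ℝ) (n : ℕ) : ℝ := ∑ k ∈ Finset.range n, x (q k)

def embedding (x : Γ → ℝ) (j : Γ) : ℝ := c j * cumSum q x (q.symm j)

def clampedRatio (y : Γ → ℝ) (n : ℕ) : ℝ := min 1 (max 0 (y (q n) / c (q n)))

def retraction (y : Γ → ℝ) (j : Γ) : ℝ :=
  partialSups (clampedRatio q c y) (q.symm j + 1) - partialSups (clampedRatio q c y) (q.symm j)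

theorem continuous_embedding : Continuous (embedding q c) :=
  continuous_pi fun _ ↦ continuous_const.mul <|
    continuous_finsetSum _ fun k _ ↦ continuous_apply (q k)

theorem continuous_retraction : Continuous (retraction q c) := by
  have hratio : ∀ n, Continuous fun y ↦ clampedRatio q c y n := fun n ↦
    continuous_const.min <| continuous_const.max <| (continuous_apply _).div_const _
  have hM : ∀ n, Continuous fun y ↦ partialSups (clampedRatio q c y) n := by
    intro n
    induction n with
    | zero => simpa only [partialSups_zero] using hratio 0
    | succ n ih => simpa only [partialSups_add_one] using ih.sup (hratio (n + 1))
  exact continuous_pi fun j ↦ (hM _).sub (hM _)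

variable {q c}

theorem cumSum_nonneg {x : Γ → ℝ} (hx : ∀ i, 0 ≤ x i) (n : ℕ) : 0 ≤ cumSum q x n :=
  Finset.sum_nonneg fun k _ ↦ hx (q k)

theorem cumSum_mono {x : Γ → ℝ} (hx : ∀ i, 0 ≤ x i) : Monotone (cumSum q x) := fun _ _ h ↦
  Finset.sum_le_sum_of_subset_of_nonneg (Finset.range_mono h) fun k _ _ ↦ hx (q k)

theorem cumSum_le_one {x : Γ → ℝ} (hx : x ∈ PosBall Γ) (n : ℕ) : cumSum q x n ≤ 1 := by
  simpa only [cumSum, Finset.sum_map, Equiv.coe_toEmbedding] using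
    (mem_posBall_iff.1 hx).2 ((Finset.range n).map q.toEmbedding)

theorem mapsTo_embedding {a b : Γ → ℝ} (ha : ∀ j, a j ≤ 0) (hc0 : ∀ j, 0 ≤ c j)
    (hcb : ∀ j, c j ≤ b j) (hc1 : ∀ s : Finset Γ, ∑ j ∈ s, c j ≤ 1) :
    MapsTo (embedding q c) (PosBall Γ) (BallAB Γ a b) := by
  intro x hx
  have h0 := (mem_posBall_iff.1 hx).1
  have hle : ∀ j, embedding q c x j ≤ c j := fun j ↦
    mul_le_of_le_one_right (hc0 j) (cumSum_le_one hx _)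
  refine mem_ballAB_of_mem_posBall ha (mem_posBall_iff.2 ⟨fun j ↦ ?_, fun s ↦ ?_⟩)
    fun j ↦ (hle j).trans (hcb j)
  · exact mul_nonneg (hc0 j) (cumSum_nonneg h0 _)
  · exact (Finset.sum_le_sum fun j _ ↦ hle j).trans (hc1 s)

theorem clampedRatio_mem_Icc (y : Γ → ℝ) (n : ℕ) :
    clampedRatio q c y n ∈ Icc 0 1 :=
  ⟨le_min zero_le_one (le_max_left _ _), min_le_left _ _⟩

theorem retraction_mem (y : Γ → ℝ) : retraction q c y ∈ PosBall Γ := by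
  set M := partialSups (clampedRatio q c y)
  have hM0 : 0 ≤ M 0 := le_partialSups_of_le _ le_rfl |>.trans' (clampedRatio_mem_Icc y 0).1
  have hM1 : ∀ n, M n ≤ 1 := fun n ↦
    partialSups_le _ n 1 fun k _ ↦ (clampedRatio_mem_Icc y k).2
  refine mem_posBall_iff.2 ⟨fun j ↦ sub_nonneg.2 (M.monotone (q.symm j).le_succ), fun s ↦ ?_⟩
  calc ∑ j ∈ s, retraction q c y j
      = ∑ n ∈ s.map q.symm.toEmbedding, (M (n + 1) - M n) := by
        rw [Finset.sum_map]; rfl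
    _ ≤ 1 - M 0 := M.monotone.sum_sub_le hM1 _
    _ ≤ 1 := by linarith

theorem retraction_embedding (hc : ∀ j, 0 < c j) {x : Γ → ℝ} (hx : x ∈ PosBall Γ) :
    retraction q c (embedding q c x) = x := by
  have h0 := (mem_posBall_iff.1 hx).1
  have hratio : clampedRatio q c (embedding q c x) = cumSum q x := by
    funext n
    rw [clampedRatio, embedding, q.symm_apply_apply, mul_div_cancel_left₀ _ (hc _).ne',
      max_eq_right (cumSum_nonneg h0 n), min_eq_right (cumSum_le_one hx n)]
  funext j
  rw [retraction, hratio, (cumSum_mono h0).partialSups_eq, cumSum, cumSum,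
    Finset.sum_range_succ_sub_sum, q.apply_symm_apply]

end Cumulative

theorem Fin.sum_const_div {m : ℕ} (hm : 0 < m) (t : ℝ) : ∑ _k : Fin m, t / m = t := by
  rw [Finset.sum_const, Finset.card_univ, Fintype.card_fin, nsmul_eq_mul,
    mul_div_cancel₀ _ (Nat.cast_ne_zero.2 hm.ne')]

namespace Block

variable {Γ : Type*} {n : Γ → ℕ} (φ : (Σ i, Fin (n i)) ↪ Γ)

def embedding (x : Γ → ℝ) : Γ → ℝ := extend φ (fun p ↦ x p.1 / n p.1) 0

def retraction (y : Γ → ℝ) (i : Γ) : ℝ := ∑ k, max (y (φ ⟨i, k⟩)) 0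

theorem embedding_apply (x : Γ → ℝ) (p : Σ i, Fin (n i)) :
    embedding φ x (φ p) = x p.1 / n p.1 :=
  φ.injective.extend_apply _ _ _

theorem embedding_apply_of_notMem_range (x : Γ → ℝ) {j : Γ} (hj : j ∉ range φ) :
    embedding φ x j = 0 :=
  extend_apply' _ _ _ hj

theorem mapsTo_embedding {a b : Γ → ℝ} (ha : ∀ j, a j ≤ 0) (hb0 : ∀ j, 0 ≤ b j)
    (hn : ∀ i, 0 < n i) (hb : ∀ p, (n p.1 : ℝ)⁻¹ ≤ b (φ p)) :
    MapsTo (embedding φ) (PosBall Γ) (BallAB Γ a b) := by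
  classical
  intro x hx
  have h0 := (mem_posBall_iff.1 hx).1
  have hcoord : ∀ j, 0 ≤ embedding φ x j ∧ embedding φ x j ≤ b j := by
    intro j
    by_cases hj : j ∈ range φ
    · obtain ⟨p, rfl⟩ := hj
      rw [embedding_apply]
      refine ⟨div_nonneg (h0 _) (Nat.cast_nonneg _), (hb p).trans' ?_⟩
      simpa only [one_div] using
        div_le_div_of_nonneg_right (le_one_of_mem_posBall hx p.1) (Nat.cast_nonneg _)
    · rw [embedding_apply_of_notMem_range φ x hj]
      exact ⟨le_rfl, hb0 j⟩
  refine mem_ballAB_of_mem_posBall ha (mem_posBall_iff.2 ⟨fun j ↦ (hcoord j).1, fun s ↦ ?_⟩)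
    fun j ↦ (hcoord j).2
  set P := s.preimage φ φ.injective.injOn
  have hP : P ⊆ (P.image Sigma.fst).sigma fun _ ↦ Finset.univ := fun p hp ↦
    Finset.mem_sigma.2 ⟨Finset.mem_image_of_mem _ hp, Finset.mem_univ _⟩
  calc ∑ j ∈ s, embedding φ x j
      = ∑ p ∈ P, x p.1 / n p.1 := by
        rw [← Finset.sum_preimage φ s φ.injective.injOn _
          fun j _ hj ↦ embedding_apply_of_notMem_range φ x hj]
        simp only [embedding_apply, P]
    _ ≤ ∑ p ∈ (P.image Sigma.fst).sigma fun _ ↦ Finset.univ, x p.1 / n p.1 :=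
        Finset.sum_le_sum_of_subset_of_nonneg hP fun p _ _ ↦
          div_nonneg (h0 _) (Nat.cast_nonneg _)
    _ = ∑ i ∈ P.image Sigma.fst, x i := by
        rw [Finset.sum_sigma]
        exact Finset.sum_congr rfl fun i _ ↦ Fin.sum_const_div (hn i) (x i)
    _ ≤ 1 := (mem_posBall_iff.1 hx).2 _

theorem mapsTo_retraction : MapsTo (retraction φ) (Ball Γ) (PosBall Γ) := by
  intro y hy
  refine mem_posBall_iff.2 ⟨fun i ↦ Finset.sum_nonneg fun k _ ↦ le_max_right _ _, fun s ↦ ?_⟩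
  calc ∑ i ∈ s, retraction φ y i
      = ∑ j ∈ (s.sigma fun _ ↦ Finset.univ).map φ, max (y j) 0 := by
        rw [Finset.sum_map, Finset.sum_sigma]; rfl
    _ ≤ ∑ j ∈ (s.sigma fun _ ↦ Finset.univ).map φ, |y j| :=
        Finset.sum_le_sum fun j _ ↦ max_le (le_abs_self _) (abs_nonneg _)
    _ ≤ 1 := hy _

theorem retraction_embedding (hn : ∀ i, 0 < n i) {x : Γ → ℝ} (hx : ∀ i, 0 ≤ x i) :
    retraction φ (embedding φ x) = x := by
  funext i
  simp only [retraction, embedding_apply,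
    max_eq_left (div_nonneg (hx i) (Nat.cast_nonneg _)), Fin.sum_const_div (hn i)]

theorem continuous_embedding : Continuous (embedding φ) := by
  refine continuous_pi fun j ↦ ?_
  by_cases hj : j ∈ range φ
  · obtain ⟨p, rfl⟩ := hj
    simpa only [embedding_apply] using (continuous_apply p.1).div_const _
  · simpa only [embedding_apply_of_notMem_range φ _ hj] using continuous_const

theorem continuous_retraction : Continuous (retraction φ) :=
  continuous_pi fun _ ↦ continuous_finsetSum _ fun _ _ ↦
    (continuous_apply _).max continuous_const

end Block

open Cardinal in
theorem exists_prod_nat_embedding_fiberwise {α β : Type*} (f : α → β)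
    (hf : ∀ a, (f ⁻¹' {f a}).Infinite) : ∃ ψ : α × ℕ ↪ α, ∀ p, f (ψ p) = f p.1 := by
  have hfiber : ∀ b, Nonempty ({a // f a = b} × ℕ ↪ {a // f a = b}) := by
    intro b
    rcases isEmpty_or_nonempty {a // f a = b} with h | ⟨⟨a, rfl⟩⟩
    · exact ⟨.ofIsEmpty⟩
    · have : Infinite {a' // f a' = f a} := (hf a).to_subtype
      rw [← Cardinal.le_def, mk_prod, lift_uzero, mk_nat, lift_aleph0, mk_mul_aleph0_eq]
  let ψ : α × ℕ ↪ α :=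
    ((Equiv.prodCongr (Equiv.sigmaFiberEquiv f).symm (Equiv.refl ℕ)).trans
      (Equiv.sigmaProdDistrib _ _)).toEmbedding.trans <|
    (Embedding.sigmaMap (Embedding.refl β) fun b ↦ (hfiber b).some).trans
      (Equiv.sigmaFiberEquiv f).toEmbedding
  exact ⟨ψ, fun p ↦ ((hfiber (f p.1)).some _).2⟩

open Cardinal in
theorem exists_prod_nat_embedding_of_uncountable {α β : Type*} [Uncountable α] [Countable β]
    (f : α → β) : ∃ ψ : α × ℕ ↪ α, ∀ a k, f (ψ (a, k)) = f (ψ (a, 0)) := by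
  set U := {a | (f ⁻¹' {f a}).Infinite}
  have hUc : Uᶜ.Countable := by
    refine (countable_iUnion fun b : {b // (f ⁻¹' {b}).Finite} ↦ b.2.countable).mono ?_
    exact fun a ha ↦ mem_iUnion.2 ⟨⟨f a, not_infinite.1 ha⟩, rfl⟩
  obtain ⟨ι⟩ : Nonempty (α ↪ U) := by
    rw [← Cardinal.le_def, ← compl_compl U, mk_compl_of_infinite Uᶜ]
    exact hUc.le_aleph0.trans_lt aleph0_lt_mk
  have hU : ∀ u : U, ((f ∘ (↑) : U → β) ⁻¹' {f u}).Infinite := by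
    intro u
    rw [preimage_comp]
    refine u.2.preimage fun v hv ↦ ?_
    rw [Subtype.range_coe]
    show (f ⁻¹' {f v}).Infinite
    rw [mem_singleton_iff.1 hv]
    exact u.2
  obtain ⟨ψ, hψ⟩ := exists_prod_nat_embedding_fiberwise _ hU
  exact ⟨(ι.prodMap (.refl ℕ)).trans (ψ.trans (.subtype _)),
    fun a k ↦ (hψ (ι a, k)).trans (hψ (ι a, 0)).symm⟩

theorem exists_sigma_fin_embedding_inv_le {Γ : Type*} [Uncountable Γ] {b : Γ → ℝ}
    (hb : ∀ j, 0 < b j) :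
    ∃ (n : Γ → ℕ) (φ : (Σ i, Fin (n i)) ↪ Γ), (∀ i, 0 < n i) ∧ ∀ p, (n p.1 : ℝ)⁻¹ ≤ b (φ p) := by
  obtain ⟨ψ, hψ⟩ := exists_prod_nat_embedding_of_uncountable fun j ↦ ⌈(b j)⁻¹⌉₊
  refine ⟨fun i ↦ ⌈(b (ψ (i, 0)))⁻¹⌉₊, ⟨fun p ↦ ψ (p.1, p.2), ?_⟩,
    fun i ↦ Nat.ceil_pos.2 (inv_pos.2 (hb _)), fun ⟨i, k⟩ ↦ ?_⟩
  · rintro ⟨i, k⟩ ⟨i', k'⟩ h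
    obtain ⟨rfl, hk⟩ := Prod.mk.inj (ψ.injective h)
    exact Sigma.ext rfl (heq_of_eq (Fin.ext hk))
  · dsimp only
    rw [← hψ i k]
    exact inv_le_of_inv_le₀ (hb _) (Nat.le_ceil _)

/-- for infinite `Γ` and an admissible pair `(a,b)`, the positive cone
`B⁺(Γ)` is homeomorphic to a retract of `B(Γ,a,b)`. -/
theorem statement3 {Γ : Type*} [Infinite Γ] (a b : Γ → ℝ) (hab : Admissible a b) :
    ∃ A : Set ↥(BallAB Γ a b),
      (∃ r : ↥(BallAB Γ a b) → ↥(BallAB Γ a b), Continuous r ∧ Set.range r ⊆ A ∧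
        ∀ x ∈ A, r x = x) ∧
      Nonempty (↥(PosBall Γ) ≃ₜ ↥A) := by
  have ha : ∀ i, a i ≤ 0 := fun i ↦ (hab i).2.1
  have hb : ∀ i, 0 < b i := fun i ↦ (hab i).2.2.1
  by_cases hΓ : Countable Γ
  · have : Denumerable Γ := (nonempty_denumerable Γ).some
    let q : ℕ ≃ Γ := (Denumerable.eqv Γ).symm
    obtain ⟨c, hc0, hcb, hc1⟩ := exists_pos_weights_le hb
    exact exists_retract_homeomorph_of_mapsTo (Cumulative.continuous_embedding q c)
      (Cumulative.continuous_retraction q c)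
      (Cumulative.mapsTo_embedding ha (fun j ↦ (hc0 j).le) hcb hc1)
      (fun y _ ↦ Cumulative.retraction_mem y)
      fun x hx ↦ Cumulative.retraction_embedding hc0 hx
  · have : Uncountable Γ := not_countable_iff.1 hΓ
    obtain ⟨n, φ, hn, hφ⟩ := exists_sigma_fin_embedding_inv_le hb
    exact exists_retract_homeomorph_of_mapsTo (Block.continuous_embedding φ)
      (Block.continuous_retraction φ)
      (Block.mapsTo_embedding φ ha (fun j ↦ (hb j).le) hn hφ)
      (fun y hy ↦ Block.mapsTo_retraction φ hy.1)
      fun x hx ↦ Block.retraction_embedding φ hn (mem_posBall_iff.1 hx).1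

end
end

section
/- For every strictly increasing bijection φ : [0,1] → [0,1] there exists a homeomorphism g : B⁺(ℕ) → B⁺(ℕ) such that ‖g(x)‖ = φ(‖x‖) for all x ∈ B⁺(ℕ). -/
open Set Filter Topology

noncomputable section

/-! A point `x` of `B⁺(ℕ)` is the same thing as its sequence of partial sums
`S_n(x) = x_0 + ⋯ + x_n`, an arbitrary monotone sequence in `[0,1]`; in the product topology
both `x ↦ S(x)` and its inverse (taking increments) are continuous coordinatewise.
Since `φ` is an order automorphism of `[0,1]`, hence a homeomorphism, setting
`S(g x) = φ ∘ S(x)` defines `g`, with inverse obtained from `φ⁻¹` in the same way, and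
`‖g x‖ = lim φ(S_n(x)) = φ(‖x‖)`. -/

def increments (s : ℕ → ℝ) : ℕ → ℝ
  | 0 => s 0
  | n + 1 => s (n + 1) - s n

lemma sum_range_succ_increments (s : ℕ → ℝ) (n : ℕ) :
    ∑ i ∈ Finset.range (n + 1), increments s i = s n := by
  induction n with
  | zero => simp [increments]
  | succ n ih => rw [Finset.sum_range_succ, ih, increments, add_sub_cancel]

lemma increments_sum_range_succ (f : ℕ → ℝ) :
    increments (fun n => ∑ i ∈ Finset.range (n + 1), f i) = f := by
  funext n
  cases n with
  | zero => simp [increments]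
  | succ n => rw [increments, Finset.sum_range_succ _ (n + 1), add_sub_cancel_left]

lemma increments_nonneg {s : ℕ → ℝ} (h₀ : 0 ≤ s 0) (hs : Monotone s) (n : ℕ) :
    0 ≤ increments s n := by
  cases n with
  | zero => exact h₀
  | succ n => exact sub_nonneg.2 (hs n.le_succ)

lemma continuous_increments {X : Type*} [TopologicalSpace X] {s : X → ℕ → ℝ}
    (hs : ∀ n, Continuous fun x => s x n) (n : ℕ) :
    Continuous fun x => increments (s x) n := by
  cases n with
  | zero => exact hs 0
  | succ n => exact (hs (n + 1)).sub (hs n)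

namespace PosBall

lemma sum_le_one {ι : Type*} (x : PosBall ι) (s : Finset ι) : ∑ i ∈ s, x.1 i ≤ 1 :=
  (Finset.sum_le_sum fun i _ => le_abs_self (x.1 i)).trans (x.2.1 s)

lemma summable (x : PosBall ℕ) : Summable x.1 :=
  summable_of_sum_range_le x.2.2 fun _ => sum_le_one x _

def partialSum (x : PosBall ℕ) (n : ℕ) : Icc (0 : ℝ) 1 :=
  ⟨∑ i ∈ Finset.range (n + 1), x.1 i, Finset.sum_nonneg fun i _ => x.2.2 i, sum_le_one x _⟩

def total (x : PosBall ℕ) : Icc (0 : ℝ) 1 :=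
  ⟨∑' n, x.1 n, tsum_nonneg x.2.2,
    (summable x).tsum_le_of_sum_range_le fun _ => sum_le_one x _⟩

lemma tsum_abs_eq_total (x : PosBall ℕ) : ∑' n, |x.1 n| = total x :=
  tsum_congr fun n => abs_of_nonneg (x.2.2 n)

lemma monotone_partialSum (x : PosBall ℕ) : Monotone (partialSum x) := fun _ _ hmn =>
  Finset.sum_le_sum_of_subset_of_nonneg (Finset.range_subset_range.2 (by omega))
    fun i _ _ => x.2.2 i

lemma continuous_partialSum (n : ℕ) : Continuous fun x : PosBall ℕ => partialSum x n :=
  (continuous_finsetSum _ fun i _ => (continuous_apply i).comp continuous_subtype_val).subtype_mk _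

lemma tendsto_partialSum (x : PosBall ℕ) : Tendsto (partialSum x) atTop (𝓝 (total x)) := by
  rw [IsEmbedding.subtypeVal.tendsto_nhds_iff]
  exact (summable x).hasSum.tendsto_sum_nat.comp (tendsto_add_atTop_nat 1)

lemma partialSum_injective : Function.Injective partialSum := fun x y h =>
  Subtype.ext <| by
    rw [← increments_sum_range_succ x.1, ← increments_sum_range_succ y.1]
    exact congrArg (fun S : ℕ → Icc (0 : ℝ) 1 => increments fun n => (S n : ℝ)) h

def ofPartialSums (s : ℕ → Icc (0 : ℝ) 1) (hs : Monotone s) : PosBall ℕ :=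
  ⟨increments fun n => (s n : ℝ), fun t => by
    have h₀ := increments_nonneg (s 0).2.1 hs
    calc ∑ i ∈ t, |increments (fun n => (s n : ℝ)) i|
        = ∑ i ∈ t, increments (fun n => (s n : ℝ)) i :=
          Finset.sum_congr rfl fun i _ => abs_of_nonneg (h₀ i)
      _ ≤ ∑ i ∈ Finset.range (t.sup id + 1), increments (fun n => (s n : ℝ)) i :=
          Finset.sum_le_sum_of_subset_of_nonneg
            (fun i hi => Finset.mem_range_succ_iff.2 (Finset.le_sup (f := id) hi))
            fun i _ _ => h₀ i
      _ = s (t.sup id) := sum_range_succ_increments _ _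
      _ ≤ 1 := (s _).2.2,
    increments_nonneg (s 0).2.1 hs⟩

lemma partialSum_ofPartialSums (s : ℕ → Icc (0 : ℝ) 1) (hs : Monotone s) :
    partialSum (ofPartialSums s hs) = s :=
  funext fun n => Subtype.ext (sum_range_succ_increments (fun k => (s k : ℝ)) n)

section map

variable (e e' : Icc (0 : ℝ) 1 ≃o Icc (0 : ℝ) 1)

def map (x : PosBall ℕ) : PosBall ℕ :=
  ofPartialSums (e ∘ partialSum x) (e.monotone.comp (monotone_partialSum x))

lemma partialSum_map (x : PosBall ℕ) : partialSum (map e x) = e ∘ partialSum x :=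
  partialSum_ofPartialSums _ _

lemma map_map (x : PosBall ℕ) : map e' (map e x) = map (e.trans e') x :=
  partialSum_injective <| by simp only [partialSum_map]; rfl

lemma map_refl (x : PosBall ℕ) : map (OrderIso.refl _) x = x :=
  partialSum_injective (partialSum_map _ x)

lemma continuous_map : Continuous (map e) :=
  (continuous_pi <| continuous_increments fun n =>
    continuous_subtype_val.comp (e.continuous.comp (continuous_partialSum n))).subtype_mk _

lemma total_map (x : PosBall ℕ) : total (map e x) = e (total x) :=
  tendsto_nhds_unique (tendsto_partialSum (map e x)) <| by
    rw [partialSum_map]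
    exact (e.continuous.tendsto _).comp (tendsto_partialSum x)

def mapHomeomorph : PosBall ℕ ≃ₜ PosBall ℕ where
  toFun := map e
  invFun := map e.symm
  left_inv x := by rw [map_map, e.self_trans_symm, map_refl]
  right_inv x := by rw [map_map, e.symm_trans_self, map_refl]
  continuous_toFun := continuous_map e
  continuous_invFun := continuous_map e.symm

end map

end PosBall

open PosBall in
/-- for every strictly increasing bijection `φ : [0,1] → [0,1]` there is
a homeomorphism `g : B⁺(ℕ) → B⁺(ℕ)` with `‖g x‖ = φ ‖x‖` for all `x`. -/
theorem statement6 (φ : ℝ → ℝ)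
    (hbij : Set.BijOn φ (Set.Icc (0:ℝ) 1) (Set.Icc (0:ℝ) 1))
    (hmono : StrictMonoOn φ (Set.Icc (0:ℝ) 1)) :
    ∃ g : ↥(PosBall ℕ) ≃ₜ ↥(PosBall ℕ),
      ∀ x : ↥(PosBall ℕ), (∑' n, |(g x).1 n|) = φ (∑' n, |x.1 n|) := by
  let e : Icc (0 : ℝ) 1 ≃o Icc (0 : ℝ) 1 :=
    { toEquiv := hbij.equiv φ
      map_rel_iff' := fun {a b} => hmono.le_iff_le a.2 b.2 }
  refine ⟨mapHomeomorph e, fun x => ?_⟩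
  rw [tsum_abs_eq_total, tsum_abs_eq_total]
  exact congrArg Subtype.val (total_map e x)

end
end

section
/- Let F be a finite set with at least two elements and let t ∈ (0,1]. Then the map φ defined by φ(x)_i = x_i - (1/|F|) ∑_{j∈F} x_j is a homeomorphism from C = {x ∈ [0,1]^F : max_{i∈F} x_i = t} onto the closed ball of radius t of the space {u ∈ ℝ^F : ∑_{j∈F} u_j = 0} endowed with the norm ‖u‖' = max{|u_i - u_j| : i, j ∈ F, i ≠ j}. In particular, C is homeomorphic to the (|F|-1)-dimensional euclidean closed ball. -/
open Set Filter Topology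

/-!
Subtracting the mean forgets exactly the translation along `(1, …, 1)`, and the inverse
translates `u` back so that its maximum becomes `t`. Since all pairwise differences of `u` are at
most `t ≤ 1`, the translated point lies in `[0, 1]^F`. The ball itself is compact and convex, and
it contains a neighbourhood of `0` in the hyperplane `∑ u = 0`, whose dimension is `|F| - 1`.
Gauge rescaling therefore makes it homeomorphic to the euclidean unit ball.
-/

noncomputable section

theorem ciSup_add_const {ι α : Type*} [Finite ι] [Nonempty ι] [ConditionallyCompleteLinearOrder α]
    [AddGroup α] [AddRightMono α] (x : ι → α) (c : α) : ⨆ i, (x i + c) = (⨆ i, x i) + c :=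
  ((OrderIso.addRight c).map_ciSup (Finite.bddAbove_range x)).symm

theorem continuous_ciSup_apply {ι α : Type*} [Fintype ι] [Nonempty ι]
    [ConditionallyCompleteLattice α] [TopologicalSpace α] [ContinuousSup α] :
    Continuous fun x : ι → α => ⨆ i, x i := by
  simp_rw [← Finset.sup'_univ_eq_ciSup]
  exact Continuous.finset_sup'_apply _ fun i _ => continuous_apply i

theorem sSup_abs_sub_le_iff {ι : Type*} [Finite ι] {u : ι → ℝ} {t : ℝ} (ht : 0 ≤ t) :
    sSup {d : ℝ | ∃ i j, i ≠ j ∧ d = |u i - u j|} ≤ t ↔ ∀ i j, u i - u j ≤ t := by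
  constructor
  · intro h i j
    rcases eq_or_ne i j with rfl | hij
    · simpa using ht
    · have hfin : {d : ℝ | ∃ i j, i ≠ j ∧ d = |u i - u j|}.Finite :=
        (finite_range fun p : ι × ι => |u p.1 - u p.2|).subset
          (by rintro d ⟨i, j, -, rfl⟩; exact ⟨(i, j), rfl⟩)
      exact (le_abs_self _).trans ((le_csSup hfin.bddAbove ⟨i, j, hij, rfl⟩).trans h)
  · intro h
    exact Real.sSup_le (by rintro d ⟨i, j, -, rfl⟩; exact abs_sub_le_iff.2 ⟨h i j, h j i⟩) ht

theorem Convex.nonempty_homeomorph_closedBall {E : Type*} [NormedAddCommGroup E]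
    [NormedSpace ℝ E] [FiniteDimensional ℝ E] {s : Set E} (hc : Convex ℝ s) (hs : IsCompact s)
    (hne : (interior s).Nonempty) :
    Nonempty (s ≃ₜ Metric.closedBall (0 : EuclideanSpace ℝ (Fin (Module.finrank ℝ E))) 1) := by
  let L : E ≃L[ℝ] EuclideanSpace ℝ (Fin (Module.finrank ℝ E)) :=
    ContinuousLinearEquiv.ofFinrankEq (finrank_euclideanSpace_fin).symm
  have hS : IsCompact (L '' s) := hs.image L.continuous
  have hint : (interior (L '' s)).Nonempty := by
    rw [← ContinuousLinearEquiv.coe_toHomeomorph, ← Homeomorph.image_interior]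
    exact hne.image _
  obtain ⟨g, -, hg, -⟩ := exists_homeomorph_image_interior_closure_frontier_eq_unitBall
    (show Convex ℝ (L '' s) from hc.linear_image L.toLinearMap) hint hS.isBounded
  rw [hS.isClosed.closure_eq] at hg
  exact ⟨(L.toHomeomorph.image s).trans ((g.image _).trans (Homeomorph.setCongr hg))⟩

namespace CubeSlice

variable {ι : Type*} [Fintype ι]

variable (ι) in
def cubeSlice (t : ℝ) : Set (ι → ℝ) := {x | (∀ i, x i ∈ Icc (0 : ℝ) 1) ∧ ⨆ i, x i = t}

variable (ι) in
/-- The closed `t`-ball of `‖u‖' = max_{i ≠ j} |u i - u j|` in the hyperplane `∑ u = 0`;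
the condition on ordered pairs also covers `|u i - u j| ≤ t`. -/
def spreadBall (t : ℝ) : Set (ι → ℝ) := {u | ∑ j, u j = 0 ∧ ∀ i j, u i - u j ≤ t}

def subMean (x : ι → ℝ) : ι → ℝ := fun i => x i - (∑ j, x j) / Fintype.card ι

def shiftMax (t : ℝ) (u : ι → ℝ) : ι → ℝ := fun i => u i + (t - ⨆ j, u j)

theorem sum_subMean [Nonempty ι] (x : ι → ℝ) : ∑ i, subMean x i = 0 := by
  simp only [subMean, Finset.sum_sub_distrib, Finset.sum_const, Finset.card_univ, nsmul_eq_mul]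
  field_simp
  ring

theorem mapsTo_subMean [Nonempty ι] {t : ℝ} :
    MapsTo subMean (cubeSlice ι t) (spreadBall ι t) := by
  rintro x ⟨hx01, rfl⟩
  refine ⟨sum_subMean x, fun i j => ?_⟩
  have hi : x i ≤ ⨆ k, x k := le_ciSup (Finite.bddAbove_range x) i
  have hj := (hx01 j).1
  simp only [subMean]
  linarith

theorem mapsTo_shiftMax [Nonempty ι] {t : ℝ} (ht : t ≤ 1) :
    MapsTo (shiftMax t) (spreadBall ι t) (cubeSlice ι t) := by
  rintro u ⟨-, hu⟩
  obtain ⟨k, hk⟩ := exists_eq_ciSup_of_finite (f := u)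
  refine ⟨fun i => ⟨?_, ?_⟩, ?_⟩
  · simp only [shiftMax, ← hk]
    linarith [hu k i]
  · have : u i ≤ u k := hk ▸ le_ciSup (Finite.bddAbove_range u) i
    simp only [shiftMax, ← hk]
    linarith
  · simp only [shiftMax, ciSup_add_const]
    ring

theorem shiftMax_subMean [Nonempty ι] {t : ℝ} {x : ι → ℝ} (hx : x ∈ cubeSlice ι t) :
    shiftMax t (subMean x) = x := by
  have hsup : ⨆ j, subMean x j = t - (∑ j, x j) / Fintype.card ι := by
    simp only [subMean, sub_eq_add_neg, ciSup_add_const, hx.2]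
  funext i
  rw [shiftMax, hsup]
  simp only [subMean]
  ring

theorem subMean_shiftMax [Nonempty ι] {t : ℝ} {u : ι → ℝ} (hu : u ∈ spreadBall ι t) :
    subMean (shiftMax t u) = u := by
  have hsum : ∑ j, shiftMax t u j = Fintype.card ι * (t - ⨆ j, u j) := by
    simp [shiftMax, Finset.sum_add_distrib, hu.1, mul_sub]
  funext i
  rw [subMean, hsum, mul_div_cancel_left₀ _ (by positivity)]
  simp [shiftMax]

theorem continuous_subMean : Continuous (subMean : (ι → ℝ) → ι → ℝ) := by
  unfold subMean; fun_prop

theorem continuous_shiftMax [Nonempty ι] (t : ℝ) : Continuous (shiftMax (ι := ι) t) := by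
  have := continuous_ciSup_apply (ι := ι) (α := ℝ)
  unfold shiftMax; fun_prop

def subMeanPartialHomeomorph [Nonempty ι] {t : ℝ} (ht : t ≤ 1) :
    PartialHomeomorph (ι → ℝ) (ι → ℝ) where
  toFun := subMean
  invFun := shiftMax t
  source := cubeSlice ι t
  target := spreadBall ι t
  map_source' := mapsTo_subMean
  map_target' := mapsTo_shiftMax ht
  left_inv' _ := shiftMax_subMean
  right_inv' _ := subMean_shiftMax
  continuousOn_toFun := continuous_subMean.continuousOn
  continuousOn_invFun := (continuous_shiftMax t).continuousOn

def subMeanHomeomorph [Nonempty ι] {t : ℝ} (ht : t ≤ 1) : cubeSlice ι t ≃ₜ spreadBall ι t :=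
  (subMeanPartialHomeomorph ht).toHomeomorphSourceTarget

theorem isClosed_spreadBall (t : ℝ) : IsClosed (spreadBall ι t) := by
  simp only [spreadBall, ofPred_and, ofPred_forall]
  exact (isClosed_eq (by fun_prop) continuous_const).inter
    (isClosed_iInter fun i => isClosed_iInter fun j => isClosed_le (by fun_prop) continuous_const)

theorem convex_spreadBall (t : ℝ) : Convex ℝ (spreadBall ι t) := by
  rintro u ⟨hu0, hu⟩ v ⟨hv0, hv⟩ a b ha hb hab
  refine ⟨by simp [Finset.sum_add_distrib, ← Finset.mul_sum, hu0, hv0], fun i j => ?_⟩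
  simp only [Pi.add_apply, Pi.smul_apply, smul_eq_mul]
  calc a * u i + b * v i - (a * u j + b * v j) = a * (u i - u j) + b * (v i - v j) := by ring
    _ ≤ a * t + b * t := by gcongr; exacts [hu i j, hv i j]
    _ = t := by rw [← add_mul, hab, one_mul]

theorem mem_Icc_of_mem_spreadBall [Nonempty ι] {t : ℝ} {u : ι → ℝ} (hu : u ∈ spreadBall ι t)
    (i : ι) : u i ∈ Icc (-t) t := by
  have hn : (0 : ℝ) < Fintype.card ι := by positivity
  have hupper : (Fintype.card ι : ℝ) * u i ≤ Fintype.card ι * t :=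
    calc _ = ∑ j, (u i - u j) := by simp [Finset.sum_sub_distrib, hu.1]
      _ ≤ ∑ _j : ι, t := Finset.sum_le_sum fun j _ => hu.2 i j
      _ = _ := by simp
  have hlower : (Fintype.card ι : ℝ) * -u i ≤ Fintype.card ι * t :=
    calc _ = ∑ j, (u j - u i) := by simp [Finset.sum_sub_distrib, hu.1]
      _ ≤ ∑ _j : ι, t := Finset.sum_le_sum fun j _ => hu.2 j i
      _ = _ := by simp
  exact ⟨by linarith [le_of_mul_le_mul_left hlower hn], le_of_mul_le_mul_left hupper hn⟩

theorem isCompact_spreadBall [Nonempty ι] (t : ℝ) : IsCompact (spreadBall ι t) :=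
  (isCompact_univ_pi fun _ => isCompact_Icc).of_isClosed_subset (isClosed_spreadBall t)
    fun _ hu i _ => mem_Icc_of_mem_spreadBall hu i

variable (ι) in
def sumZeroSubspace : Submodule ℝ (ι → ℝ) :=
  LinearMap.ker (∑ j, LinearMap.proj j : (ι → ℝ) →ₗ[ℝ] ℝ)

theorem mem_sumZeroSubspace {u : ι → ℝ} : u ∈ sumZeroSubspace ι ↔ ∑ j, u j = 0 := by
  simp [sumZeroSubspace]

theorem finrank_sumZeroSubspace_add_one [Nonempty ι] :
    Module.finrank ℝ (sumZeroSubspace ι) + 1 = Fintype.card ι := by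
  rw [sumZeroSubspace, Module.Dual.finrank_ker_add_one_of_ne_zero,
    Module.finrank_fintype_fun_eq_card]
  intro h
  simpa using LinearMap.congr_fun h 1

theorem spreadBall_subset_sumZeroSubspace (t : ℝ) : spreadBall ι t ⊆ sumZeroSubspace ι :=
  fun _ hu => mem_sumZeroSubspace.2 hu.1

theorem zero_mem_interior_preimage_spreadBall {t : ℝ} (ht : 0 < t) :
    (0 : sumZeroSubspace ι) ∈ interior (Subtype.val ⁻¹' spreadBall ι t) := by
  refine mem_interior_iff_mem_nhds.2 (mem_of_superset (Metric.ball_mem_nhds 0 (half_pos ht)) ?_)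
  intro u hu
  have hnorm : ∀ i, |(u : ι → ℝ) i| < t / 2 := fun i =>
    (norm_le_pi_norm (u : ι → ℝ) i).trans_lt (by simpa using hu)
  refine ⟨mem_sumZeroSubspace.1 u.2, fun i j => ?_⟩
  linarith [le_abs_self ((u : ι → ℝ) i), neg_abs_le ((u : ι → ℝ) j), hnorm i, hnorm j]

theorem nonempty_homeomorph_spreadBall_closedBall [Nonempty ι] {t : ℝ} (ht : 0 < t) :
    Nonempty (spreadBall ι t ≃ₜ
      Metric.closedBall (0 : EuclideanSpace ℝ (Fin (Fintype.card ι - 1))) 1) := by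
  set A : Set (sumZeroSubspace ι) := Subtype.val ⁻¹' spreadBall ι t
  have hA : IsCompact A :=
    (Submodule.closed_of_finiteDimensional _).isClosedEmbedding_subtypeVal.isCompact_preimage
      (isCompact_spreadBall (ι := ι) t)
  have hconv : Convex ℝ A := (convex_spreadBall t).linear_preimage (sumZeroSubspace ι).subtype
  obtain ⟨e⟩ := hconv.nonempty_homeomorph_closedBall hA
    ⟨0, zero_mem_interior_preimage_spreadBall ht⟩
  have hrank : Module.finrank ℝ (sumZeroSubspace ι) = Fintype.card ι - 1 := by
    have := finrank_sumZeroSubspace_add_one (ι := ι); omega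
  rw [hrank] at e
  have hval : Subtype.val '' A = spreadBall ι t :=
    image_preimage_eq_of_subset (by simpa using spreadBall_subset_sumZeroSubspace t)
  exact ⟨(Homeomorph.setCongr hval).symm.trans
    ((Topology.IsEmbedding.subtypeVal.homeomorphImage A).symm.trans e)⟩

end CubeSlice

/-- for a finite set `F` with at least two elements and `t ∈ (0,1]`, the
map `φ(x)_i = x_i - (1/|F|) ∑_j x_j` is a homeomorphism from
`C = {x ∈ [0,1]^F : max_i x_i = t}` onto the closed ball of radius `t` of the
hyperplane `{u ∈ ℝ^F : ∑_j u_j = 0}` with the norm `‖u‖' = max_{i ≠ j} |u_i - u_j|`;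
in particular `C` is homeomorphic to the `(|F|-1)`-dimensional euclidean closed ball. -/
theorem statement9 (F : Type*) [Fintype F] (hF : 2 ≤ Fintype.card F)
    (t : ℝ) (ht : t ∈ Set.Ioc (0:ℝ) 1) :
    (∃ h : ↥{x : F → ℝ | (∀ i, x i ∈ Set.Icc (0:ℝ) 1) ∧ (⨆ i, x i) = t} ≃ₜ
        ↥{u : F → ℝ | (∑ j, u j = 0) ∧
          sSup {d : ℝ | ∃ i j, i ≠ j ∧ d = |u i - u j|} ≤ t},
      ∀ x, ((h x : F → ℝ) = fun i => x.1 i - (∑ j, x.1 j) / (Fintype.card F))) ∧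
    Nonempty (↥{x : F → ℝ | (∀ i, x i ∈ Set.Icc (0:ℝ) 1) ∧ (⨆ i, x i) = t} ≃ₜ
      ↥(Metric.closedBall (0 : EuclideanSpace ℝ (Fin (Fintype.card F - 1))) 1)) := by
  have : Nonempty F := Fintype.card_pos_iff.mp (by omega)
  have hB : {u : F → ℝ | (∑ j, u j = 0) ∧ sSup {d : ℝ | ∃ i j, i ≠ j ∧ d = |u i - u j|} ≤ t}
      = CubeSlice.spreadBall F t := by
    ext u
    simp only [CubeSlice.spreadBall, mem_ofPred_eq, sSup_abs_sub_le_iff ht.1.le]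
  rw [hB]
  obtain ⟨e⟩ := CubeSlice.nonempty_homeomorph_spreadBall_closedBall (ι := F) ht.1
  exact ⟨⟨CubeSlice.subMeanHomeomorph ht.2, fun _ => rfl⟩,
    ⟨(CubeSlice.subMeanHomeomorph ht.2).trans e⟩⟩

end
end

section
/- Let Γ be a set and let u : A(Γ) → B(Γ) be the canonical embedding sending each i ∈ Γ to the characteristic vector e_i (the element of B(Γ) which is zero in every coordinate except for value 1 in coordinate i) and the point at infinity to the zero vector. Then the operator T : C(A(Γ)) → C(B(Γ)) defined by T(f)(x) = f(∞)·(1 - ∑_{i∈Γ}|x_i|) + ∑_{i∈Γ} |x_i| f(i) is a well-defined regular extension operator for u: T is linear, positive, of norm one, sends constant functions to constant functions of the same value, and satisfies T(f)(u(p)) = f(p) for all p ∈ A(Γ) and f ∈ C(A(Γ)). -/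
open Set Filter Topology

noncomputable section

theorem isCompact_ball (ι : Type*) : IsCompact (Ball ι) := by
  have hsub : Ball ι ⊆ Set.pi Set.univ (fun _ : ι => Set.Icc (-1:ℝ) 1) := by
    intro x hx i _
    have h := hx {i}
    simp only [Finset.sum_singleton] at h
    simpa [Set.mem_Icc] using abs_le.mp h
  have hclosed : IsClosed (Ball ι) := by
    have : Ball ι = ⋂ s : Finset ι, {x : ι → ℝ | ∑ i ∈ s, |x i| ≤ 1} := by
      ext x; simp [Ball, Set.mem_iInter]
    rw [this]
    refine isClosed_iInter fun s => isClosed_le ?_ continuous_const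
    exact continuous_finset_sum s fun i _ => (continuous_apply i).abs
  exact ((isCompact_univ_pi fun _ : ι => isCompact_Icc)).of_isClosed_subset hclosed hsub

instance Ball.compactSpace (ι : Type*) : CompactSpace (Ball ι) :=
  isCompact_iff_compactSpace.mp (isCompact_ball ι)

/-!
Positivity can be read off the formula, and a positive operator `T : C(K) → C(L)` fixing
constants satisfies `-‖f‖ ≤ T f ≤ ‖f‖`, whence `‖T‖ = 1`. The substance is that `T f` is
continuous on `B(Γ)`. Write `T f x = f ∞ + ∑ i, |x i| (f i - f ∞)`: the coefficients
`f i - f ∞` tend to `0` along the cofinite filter, so, as `∑ i, |x i| ≤ 1` on `B(Γ)`, the finite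
partial sums, each continuous for the product topology, converge to `T f` uniformly on `B(Γ)`.
-/

namespace Ball

variable {ι : Type*}

lemma zero_mem : (0 : ι → ℝ) ∈ Ball ι := fun s => by simp

instance : Nonempty (Ball ι) := ⟨⟨0, zero_mem⟩⟩

lemma single_mem [DecidableEq ι] (i : ι) : (Pi.single i 1 : ι → ℝ) ∈ Ball ι := fun s => by
  simp only [Pi.single_apply, apply_ite, abs_one, abs_zero, Finset.sum_ite_eq']
  split_ifs <;> norm_num

lemma summable_abs (x : Ball ι) : Summable fun i => |x.1 i| :=
  summable_of_sum_le (fun _ => abs_nonneg _) x.2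

lemma tsum_abs_le_one (x : Ball ι) : ∑' i, |x.1 i| ≤ 1 :=
  (summable_abs x).tsum_le_of_sum_le x.2

lemma summable_abs_mul (x : Ball ι) {g : ι → ℝ} {C : ℝ} (hg : ∀ i, |g i| ≤ C) :
    Summable fun i => |x.1 i| * g i :=
  ((summable_abs x).mul_right C).of_norm_bounded fun i => by
    rw [Real.norm_eq_abs, abs_mul, abs_abs]
    exact mul_le_mul_of_nonneg_left (hg i) (abs_nonneg _)

lemma abs_tsum_abs_mul_le (x : Ball ι) {g : ι → ℝ} {C : ℝ} (hC : 0 ≤ C)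
    (hg : ∀ i, |g i| ≤ C) : |∑' i, |x.1 i| * g i| ≤ C :=
  calc |∑' i, |x.1 i| * g i| = ‖∑' i, |x.1 i| * g i‖ := (Real.norm_eq_abs _).symm
    _ ≤ ∑' i, |x.1 i| * C :=
        tsum_of_norm_bounded ((summable_abs x).mul_right C).hasSum fun i => by
          simpa [abs_mul] using mul_le_mul_of_nonneg_left (hg i) (abs_nonneg (x.1 i))
    _ = (∑' i, |x.1 i|) * C := tsum_mul_right
    _ ≤ C := mul_le_of_le_one_left hC (tsum_abs_le_one x)

lemma abs_tsum_abs_mul_sub_sum_le (x : Ball ι) {g : ι → ℝ} {C : ℝ} (hg : ∀ i, |g i| ≤ C)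
    (s : Finset ι) {ε : ℝ} (hε : 0 ≤ ε) (hgs : ∀ i ∉ s, |g i| ≤ ε) :
    |∑' i, |x.1 i| * g i - ∑ i ∈ s, |x.1 i| * g i| ≤ ε := by
  have hsum := summable_abs_mul x hg
  have htail : ∑' i, |x.1 i| * g i - ∑ i ∈ s, |x.1 i| * g i =
      ∑' i, |x.1 i| * (↑s : Set ι)ᶜ.indicator g i := by
    rw [sum_eq_tsum_indicator, ← hsum.tsum_sub (hsum.indicator _)]
    congr 1 with i
    by_cases hi : i ∈ s <;> simp [hi]
  rw [htail]
  exact abs_tsum_abs_mul_le x hε fun i => by by_cases hi : i ∈ s <;> simp [hi, hε, hgs]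

lemma continuous_tsum_abs_mul {g : ι → ℝ} (hg : Tendsto g cofinite (𝓝 0)) :
    Continuous fun x : Ball ι => ∑' i, |x.1 i| * g i := by
  obtain ⟨C, hC⟩ : ∃ C, ∀ i, |g i| ≤ C := by
    obtain ⟨C, hC⟩ := hg.abs.bddAbove_range_of_cofinite
    exact ⟨C, fun i => hC ⟨i, rfl⟩⟩
  refine TendstoUniformly.continuous (p := atTop)
    (F := fun (s : Finset ι) (x : Ball ι) => ∑ i ∈ s, |x.1 i| * g i) ?_
    (Eventually.of_forall fun s => continuous_finsetSum s fun i _ =>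
      ((continuous_apply i).comp continuous_subtype_val).abs.mul continuous_const).frequently
  refine Metric.tendstoUniformly_iff.2 fun ε hε => ?_
  have hfin : {i | ε / 2 ≤ |g i|}.Finite := by
    have := (Metric.tendsto_nhds.1 hg (ε / 2) (half_pos hε))
    simpa [Real.dist_eq, not_lt] using eventually_cofinite.1 this
  filter_upwards [eventually_ge_atTop hfin.toFinset] with s hs x
  rw [Real.dist_eq]
  refine (abs_tsum_abs_mul_sub_sum_le x hC s (half_pos hε).le fun i hi => ?_).trans_lt
    (half_lt_self hε)
  exact (not_le.1 fun h => hi (hs (hfin.mem_toFinset.2 h))).le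

end Ball

section PositiveOperator

variable {X Y : Type*} [TopologicalSpace X] [CompactSpace X] [TopologicalSpace Y] [CompactSpace Y]

lemma ContinuousMap.abs_apply_le_norm (f : C(X, ℝ)) (p : X) : |f p| ≤ ‖f‖ := by
  simpa using f.norm_coe_le_norm p

lemma LinearMap.norm_apply_le_of_pos_of_map_const (L : C(X, ℝ) →ₗ[ℝ] C(Y, ℝ))
    (hpos : ∀ f : C(X, ℝ), (∀ p, 0 ≤ f p) → ∀ y, 0 ≤ L f y)
    (hconst : ∀ c : ℝ, L (ContinuousMap.const X c) = ContinuousMap.const Y c) (f : C(X, ℝ)) :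
    ‖L f‖ ≤ ‖f‖ := by
  have hf := f.abs_apply_le_norm
  have hupper := hpos (ContinuousMap.const X ‖f‖ - f) fun p => by
    simp only [ContinuousMap.sub_apply, ContinuousMap.const_apply]
    linarith [abs_le.1 (hf p)]
  have hlower := hpos (ContinuousMap.const X ‖f‖ + f) fun p => by
    simp only [ContinuousMap.add_apply, ContinuousMap.const_apply]
    linarith [abs_le.1 (hf p)]
  refine (ContinuousMap.norm_le _ (norm_nonneg f)).2 fun y => abs_le.2 ⟨?_, ?_⟩
  · simpa [map_add, hconst, neg_le_iff_add_nonneg'] using hlower y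
  · simpa [map_sub, hconst] using hupper y

lemma ContinuousLinearMap.norm_eq_one_of_pos_of_map_const [Nonempty Y]
    (T : C(X, ℝ) →L[ℝ] C(Y, ℝ))
    (hpos : ∀ f : C(X, ℝ), (∀ p, 0 ≤ f p) → ∀ y, 0 ≤ T f y)
    (hconst : ∀ c : ℝ, T (ContinuousMap.const X c) = ContinuousMap.const Y c) :
    ‖T‖ = 1 := by
  refine le_antisymm (T.opNorm_le_bound zero_le_one fun f => ?_) ?_
  · simpa using LinearMap.norm_apply_le_of_pos_of_map_const T.toLinearMap hpos hconst f
  · have h1 : ‖ContinuousMap.const X (1 : ℝ)‖ ≤ 1 :=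
      (ContinuousMap.norm_le _ zero_le_one).2 fun _ => by simp
    calc (1 : ℝ) = ‖ContinuousMap.const Y (1 : ℝ)‖ := by simp
      _ = ‖T (ContinuousMap.const X 1)‖ := by rw [hconst]
      _ ≤ ‖T‖ * ‖ContinuousMap.const X (1 : ℝ)‖ := T.le_opNorm _
      _ ≤ ‖T‖ := mul_le_of_le_one_right (norm_nonneg T) h1

end PositiveOperator

section Extension

open OnePoint

variable {Γ : Type*}

def ballEmbedding [DecidableEq Γ] (p : OnePoint Γ) : Ball Γ :=
  p.elim ⟨0, Ball.zero_mem⟩ fun i => ⟨Pi.single i 1, Ball.single_mem i⟩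

variable [TopologicalSpace Γ] [DiscreteTopology Γ]

/-- Centred at `f ∞` because `x ↦ ∑' i, |x i|` is not continuous on `Ball Γ` (`e_i → 0`),
whereas `f i - f ∞ → 0` along the cofinite filter. -/
def ballExtension (f : C(OnePoint Γ, ℝ)) : C(Ball Γ, ℝ) where
  toFun x := f ∞ + ∑' i, |x.1 i| * (f i - f ∞)
  continuous_toFun := continuous_const.add <| Ball.continuous_tsum_abs_mul <| by
    simpa using ((continuous_iff_from_discrete f).1 f.continuous).sub_const (f ∞)

lemma ballExtension_apply (f : C(OnePoint Γ, ℝ)) (x : Ball Γ) :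
    ballExtension f x = f ∞ + ∑' i, |x.1 i| * (f i - f ∞) :=
  rfl

lemma ballExtension_apply' (f : C(OnePoint Γ, ℝ)) (x : Ball Γ) :
    ballExtension f x = f ∞ * (1 - ∑' i, |x.1 i|) + ∑' i, |x.1 i| * f i := by
  have hsum := Ball.summable_abs_mul x fun i => f.abs_apply_le_norm i
  have htsum : ∑' i, |x.1 i| * (f i - f ∞) = ∑' i, |x.1 i| * f i - (∑' i, |x.1 i|) * f ∞ := by
    rw [← tsum_mul_right, ← hsum.tsum_sub ((Ball.summable_abs x).mul_right _)]
    simp_rw [mul_sub]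
  rw [ballExtension_apply, htsum]
  ring

lemma ballExtension_nonneg {f : C(OnePoint Γ, ℝ)} (hf : ∀ p, 0 ≤ f p) (x : Ball Γ) :
    0 ≤ ballExtension f x := by
  rw [ballExtension_apply']
  exact add_nonneg (mul_nonneg (hf ∞) (sub_nonneg.2 (Ball.tsum_abs_le_one x)))
    (tsum_nonneg fun i => mul_nonneg (abs_nonneg _) (hf i))

lemma ballExtension_const (c : ℝ) :
    ballExtension (ContinuousMap.const (OnePoint Γ) c) = ContinuousMap.const (Ball Γ) c := by
  ext x
  simp [ballExtension_apply]

lemma ballExtension_ballEmbedding [DecidableEq Γ] (f : C(OnePoint Γ, ℝ)) (p : OnePoint Γ) :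
    ballExtension f (ballEmbedding p) = f p := by
  induction p using OnePoint.rec with
  | infty => simp [ballExtension_apply, ballEmbedding]
  | coe i =>
    rw [ballExtension_apply, tsum_eq_single i fun j hj => by simp [ballEmbedding, hj]]
    simp [ballEmbedding]

def ballExtensionCLM : C(OnePoint Γ, ℝ) →L[ℝ] C(Ball Γ, ℝ) :=
  LinearMap.mkContinuous
    { toFun := ballExtension
      map_add' := fun f g => by
        ext x
        simp only [ContinuousMap.add_apply, ballExtension_apply', mul_add]
        rw [(Ball.summable_abs_mul x fun i => f.abs_apply_le_norm i).tsum_add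
          (Ball.summable_abs_mul x fun i => g.abs_apply_le_norm i)]
        ring
      map_smul' := fun c f => by
        ext x
        simp only [ContinuousMap.smul_apply, ballExtension_apply', smul_eq_mul,
          RingHom.id_apply, mul_left_comm _ c, tsum_mul_left]
        ring }
    1 fun f => by
      rw [one_mul]
      exact LinearMap.norm_apply_le_of_pos_of_map_const _ (fun f hf => ballExtension_nonneg hf)
        ballExtension_const f

end Extension

/-- the canonical embedding `u : A(Γ) → B(Γ)` (sending `i` to the
characteristic vector `e_i` and `∞` to `0`) admits the regular extension operator
`T(f)(x) = f(∞)(1 - ∑_i |x_i|) + ∑_i |x_i| f(i)`. -/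
theorem statement13 {Γ : Type*} [TopologicalSpace Γ] [DiscreteTopology Γ] [DecidableEq Γ] :
    ∃ u : OnePoint Γ → ↥(Ball Γ),
      (∀ i : Γ, (u (OnePoint.some i) : Γ → ℝ) = Pi.single i 1) ∧
      ((u OnePoint.infty : Γ → ℝ) = 0) ∧
      ∃ T : C(OnePoint Γ, ℝ) →L[ℝ] C(↥(Ball Γ), ℝ),
        (∀ (f : C(OnePoint Γ, ℝ)) (x : ↥(Ball Γ)),
          T f x = f OnePoint.infty * (1 - ∑' i, |x.1 i|) +
            ∑' i, |x.1 i| * f (OnePoint.some i)) ∧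
        (∀ f : C(OnePoint Γ, ℝ), (∀ p, 0 ≤ f p) → ∀ x, 0 ≤ T f x) ∧
        ‖T‖ = 1 ∧
        (∀ c : ℝ, T (ContinuousMap.const (OnePoint Γ) c) =
          ContinuousMap.const ↥(Ball Γ) c) ∧
        (∀ (f : C(OnePoint Γ, ℝ)) (p : OnePoint Γ), T f (u p) = f p) := by
  have hpos : ∀ f : C(OnePoint Γ, ℝ), (∀ p, 0 ≤ f p) → ∀ x, 0 ≤ ballExtensionCLM f x :=
    fun _ hf => ballExtension_nonneg hf
  exact ⟨ballEmbedding, fun _ => rfl, rfl, ballExtensionCLM, ballExtension_apply', hpos,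
    ballExtensionCLM.norm_eq_one_of_pos_of_map_const hpos ballExtension_const,
    ballExtension_const, ballExtension_ballEmbedding⟩

end
end

section
/- Let Γ be a set and let m, n be positive natural numbers (or countable powers). If there exists a topological embedding v : B(Γ)^n → B(Γ)^m which admits a regular extension operator T : C(B(Γ)^n) → C(B(Γ)^m), then there exists a continuous surjection from B(Γ)^m onto B(Γ)^n. -/
/-!
A regular extension operator `T` is positive and unital, so `|T f| ≤ T |f|` pointwise. Hence
for each point `y` and each coordinate `i`, the numbers `T (x ↦ x i γ) y` still have absolute
sum at most one, i.e. they form a point of `B(Γ)`: this is the barycenter of the probability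
measure `f ↦ T f y`. The resulting map `B(Γ)^κ → B(Γ)^ι` is continuous, and it sends `v x` to
`x` because `T` extends functions along `v`.
-/

open Set Filter Topology

noncomputable section

section PositiveOperator

variable {X Y : Type*} [TopologicalSpace X] [TopologicalSpace Y] (T : C(X, ℝ) →ₗ[ℝ] C(Y, ℝ))
  (hpos : ∀ f : C(X, ℝ), (∀ x, 0 ≤ f x) → ∀ y, 0 ≤ T f y)
include hpos

theorem apply_le_apply_of_le {f g : C(X, ℝ)} (hfg : ∀ x, f x ≤ g x) (y : Y) :
    T f y ≤ T g y := by
  simpa [map_sub] using hpos (g - f) (fun x => sub_nonneg.mpr (hfg x)) y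

theorem abs_apply_le_apply_abs (f : C(X, ℝ)) (y : Y) : |T f y| ≤ T |f| y := by
  refine abs_le.mpr ⟨?_, apply_le_apply_of_le T hpos (fun x => le_abs_self (f x)) y⟩
  have := apply_le_apply_of_le T hpos (f := -f) (g := |f|) (fun x => neg_le_abs (f x)) y
  simp only [map_neg, ContinuousMap.neg_apply] at this
  linarith

theorem sum_abs_apply_le_one (hone : T 1 = 1) {α : Type*} (f : α → C(X, ℝ)) (s : Finset α)
    (hf : ∀ x, ∑ a ∈ s, |f a x| ≤ 1) (y : Y) : ∑ a ∈ s, |T (f a) y| ≤ 1 :=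
  calc ∑ a ∈ s, |T (f a) y| ≤ ∑ a ∈ s, T |f a| y :=
        Finset.sum_le_sum fun a _ => abs_apply_le_apply_abs T hpos (f a) y
    _ = T (∑ a ∈ s, |f a|) y := by simp [map_sum]
    _ ≤ T 1 y := apply_le_apply_of_le T hpos (fun x => by simpa using hf x) y
    _ = 1 := by simp [hone]

end PositiveOperator

namespace Ball

variable {X Y : Type*} [TopologicalSpace X] [TopologicalSpace Y] {Γ : Type*}

def coord (p : C(X, Ball Γ)) (γ : Γ) : C(X, ℝ) :=
  ⟨fun x => (p x : Γ → ℝ) γ, (continuous_apply γ).comp (continuous_subtype_val.comp p.continuous)⟩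

def barycenterMap (T : C(X, ℝ) →ₗ[ℝ] C(Y, ℝ))
    (hpos : ∀ f : C(X, ℝ), (∀ x, 0 ≤ f x) → ∀ y, 0 ≤ T f y) (hone : T 1 = 1)
    (p : C(X, Ball Γ)) : C(Y, Ball Γ) where
  toFun y := ⟨fun γ => T (coord p γ) y,
    fun s => sum_abs_apply_le_one T hpos hone (coord p) s (fun x => (p x).2 s) y⟩
  continuous_toFun := (continuous_pi fun γ => (T (coord p γ)).continuous).subtype_mk _

theorem barycenterMap_apply_of_extends {T : C(X, ℝ) →ₗ[ℝ] C(Y, ℝ)}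
    {hpos : ∀ f : C(X, ℝ), (∀ x, 0 ≤ f x) → ∀ y, 0 ≤ T f y} {hone : T 1 = 1}
    {v : X → Y} (hext : ∀ f x, T f (v x) = f x) (p : C(X, Ball Γ)) (x : X) :
    barycenterMap T hpos hone p (v x) = p x :=
  Subtype.ext <| funext fun γ => hext (coord p γ) x

end Ball

theorem statement16_general {Γ : Type*} (ι κ : Type)
    (v : (ι → ↥(Ball Γ)) → (κ → ↥(Ball Γ)))
    (T : C(ι → ↥(Ball Γ), ℝ) →L[ℝ] C(κ → ↥(Ball Γ), ℝ))
    (hext : ∀ (f : C(ι → ↥(Ball Γ), ℝ)) (x : ι → ↥(Ball Γ)), T f (v x) = f x)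
    (hpos : ∀ f : C(ι → ↥(Ball Γ), ℝ), (∀ x, 0 ≤ f x) → ∀ y, 0 ≤ T f y)
    (hconst : ∀ c : ℝ, T (ContinuousMap.const (ι → ↥(Ball Γ)) c) =
      ContinuousMap.const (κ → ↥(Ball Γ)) c) :
    ∃ g : (κ → ↥(Ball Γ)) → (ι → ↥(Ball Γ)), Continuous g ∧ Function.Surjective g := by
  let barycenterCoord (i : ι) : C(κ → Ball Γ, Ball Γ) :=
    Ball.barycenterMap T.toLinearMap hpos (hconst 1) ⟨fun x => x i, continuous_apply i⟩
  refine ⟨fun y i => barycenterCoord i y, continuous_pi fun i => (barycenterCoord i).continuous,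
    fun x => ⟨v x, funext fun i => ?_⟩⟩
  exact Ball.barycenterMap_apply_of_extends hext _ x

/-- if there is a topological embedding `v : B(Γ)^ι → B(Γ)^κ`
(`ι`, `κ` nonempty countable index sets, covering both finite positive powers and
countable powers) admitting a regular extension operator `T`, then `B(Γ)^κ` maps
continuously onto `B(Γ)^ι`. -/
theorem statement16 {Γ : Type*} (ι κ : Type) [Countable ι] [Countable κ]
    [Nonempty ι] [Nonempty κ]
    (v : (ι → ↥(Ball Γ)) → (κ → ↥(Ball Γ))) (hv : IsEmbedding v)
    (T : C(ι → ↥(Ball Γ), ℝ) →L[ℝ] C(κ → ↥(Ball Γ), ℝ))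
    (hext : ∀ (f : C(ι → ↥(Ball Γ), ℝ)) (x : ι → ↥(Ball Γ)), T f (v x) = f x)
    (hpos : ∀ f : C(ι → ↥(Ball Γ), ℝ), (∀ x, 0 ≤ f x) → ∀ y, 0 ≤ T f y)
    (hnorm : ‖T‖ = 1)
    (hconst : ∀ c : ℝ, T (ContinuousMap.const (ι → ↥(Ball Γ)) c) =
      ContinuousMap.const (κ → ↥(Ball Γ)) c) :
    ∃ g : (κ → ↥(Ball Γ)) → (ι → ↥(Ball Γ)), Continuous g ∧ Function.Surjective g :=
  statement16_general ι κ v T hext hpos hconst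
end
end

section
/- Let Γ be a set. Then B(Γ) is sequentially compact: every sequence in B(Γ) has a convergent subsequence (convergence in the product topology). -/
/-!
Every point of `B(Γ)` has countable support, so a sequence in `B(Γ)` lives on the countable
union `S` of the supports of its terms. Restricted to `S`, the sequence lies in `[-1, 1]^S`, a
compact first-countable space, so it has a convergent subsequence; extending the limit by zero off `S`
gives coordinatewise convergence in `ℝ^Γ`, and the limit stays in `B(Γ)` because `B(Γ)` is closed.
-/

open Set Filter Topology

noncomputable section

theorem exists_subseq_tendsto_pi_of_support_subset {ι X : Type*} [TopologicalSpace X] [Zero X]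
    [FirstCountableTopology X] {K : Set X} (hK : IsCompact K) {S : Set ι} (hS : S.Countable)
    {f : ℕ → ι → X} (hfK : ∀ n i, f n i ∈ K) (hfS : ∀ n, Function.support (f n) ⊆ S) :
    ∃ g : ι → X, ∃ φ : ℕ → ℕ, StrictMono φ ∧ Tendsto (f ∘ φ) atTop (𝓝 g) := by
  classical
  have : Countable S := hS.to_subtype
  obtain ⟨g, -, φ, hφ, hg⟩ := (isCompact_univ_pi fun _ : S => hK).tendsto_subseq
    (x := fun n (i : S) => f n i) fun n i _ => hfK n i
  refine ⟨fun i => if h : i ∈ S then g ⟨i, h⟩ else 0, φ, hφ, tendsto_pi_nhds.mpr fun i => ?_⟩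
  by_cases hi : i ∈ S
  · simpa [hi] using tendsto_pi_nhds.mp hg ⟨i, hi⟩
  · have hzero : ∀ n, f n i = 0 := fun n => Function.notMem_support.mp fun h => hi (hfS n h)
    simpa [hi, hzero] using tendsto_const_nhds

namespace Ball

variable {ι : Type*} {x : ι → ℝ}

theorem isClosed : IsClosed (Ball ι) := by
  simp only [Ball, ofPred_forall]
  exact isClosed_iInter fun s => isClosed_le (by fun_prop) continuous_const

theorem apply_mem_Icc (hx : x ∈ Ball ι) (i : ι) : x i ∈ Icc (-1) 1 :=
  abs_le.mp (by simpa using hx {i})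

theorem countable_support (hx : x ∈ Ball ι) : (Function.support x).Countable := by
  simpa [Function.support] using
    (summable_of_sum_le (fun i => abs_nonneg (x i)) hx).countable_support

end Ball

/-- `B(Γ)` is sequentially compact: every sequence has a subsequence
converging in the (subspace of the) product topology. -/
theorem statement18 {Γ : Type*} (x : ℕ → ↥(Ball Γ)) :
    ∃ (y : ↥(Ball Γ)) (φ : ℕ → ℕ), StrictMono φ ∧
      Tendsto (x ∘ φ) atTop (nhds y) := by
  obtain ⟨y, φ, hφ, hy⟩ := exists_subseq_tendsto_pi_of_support_subset isCompact_Icc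
    (countable_iUnion fun n => Ball.countable_support (x n).2)
    (fun n => Ball.apply_mem_Icc (x n).2)
    (fun n => subset_iUnion (fun n => Function.support (x n : Γ → ℝ)) n)
  have hyBall : y ∈ Ball Γ := Ball.isClosed.mem_of_tendsto hy (.of_forall fun n => (x (φ n)).2)
  exact ⟨⟨y, hyBall⟩, φ, hφ, tendsto_subtype_rng.mpr hy⟩

end
end
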